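/- Let γ☆ : [0,1] → ℝ² be a regular smooth straight-line parametrization (so γ☆''∥γ☆' is allowed, with constant unit tangent τ☆ and normal ν☆), let φ° be a smooth elliptic anisotropy, and consider E(h) = ∫₀¹ φ°((γ☆' + h'ν☆ + μ'τ☆)^⊥) dx, where μ depends linearly on h via a fixed constant matrix. Then the second variation of E at h = 0 in directions h₀, h₁ satisfies E''(0)h₀h₁ = ∫₀¹ |γ☆'|⁻¹ (D²φ°(ν☆)τ☆·τ☆) h₀' h₁' dx; in particular the terms involving μ₀', μ₁' drop out because D²φ°(ν☆)ν☆ = 0. -/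

import Mathlib

noncomputable section

abbrev E2 := EuclideanSpace ℝ (Fin 2)

/-- φ is a norm on ℝ². -/
def IsNorm2 (φ : E2 → ℝ) : Prop :=
  (∀ x, 0 ≤ φ x) ∧ (∀ x, φ x = 0 ↔ x = 0) ∧
  (∀ (a : ℝ) (x : E2), φ (a • x) = |a| * φ x) ∧ ∀ x y, φ (x + y) ≤ φ x + φ y

/-- Anticlockwise rotation by 90 degrees in ℝ². -/
def rot90 (v : E2) : E2 :=
  (WithLp.equiv 2 (Fin 2 → ℝ)).symm ![-(v 1), v 0]

/-- Second derivative (Hessian) of a scalar function, applied to two directions. -/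
def hess (φ : E2 → ℝ) (p v w : E2) : ℝ := fderiv ℝ (fderiv ℝ φ) p v w

/-! ### rot90 lemmas -/

lemma rot90_add (u v : E2) : rot90 (u + v) = rot90 u + rot90 v := by
  ext i; fin_cases i <;> simp [rot90] <;> ring

lemma rot90_smul (a : ℝ) (v : E2) : rot90 (a • v) = a • rot90 v := by
  ext i; fin_cases i <;> simp [rot90]

lemma rot90_rot90 (v : E2) : rot90 (rot90 v) = -v := by
  ext i; fin_cases i <;> simp [rot90]

lemma norm_rot90 (v : E2) : ‖rot90 v‖ = ‖v‖ := by
  simp [EuclideanSpace.norm_eq, rot90, Fin.sum_univ_two]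
  ring_nf

lemma inner_rot90 (v : E2) : inner ℝ (rot90 v) v = (0:ℝ) := by
  simp [PiLp.inner_apply, Fin.sum_univ_two, rot90]
  ring

lemma rot90_decomp (v : E2) :
    rot90 v = (-(v 1)) • EuclideanSpace.single 0 1 + (v 0) • EuclideanSpace.single 1 1 := by
  ext i; fin_cases i <;> simp [rot90, EuclideanSpace.single_apply]

lemma continuous_rot90 : Continuous rot90 := by
  have h1 : Continuous fun v : E2 => (v 1) :=
    (EuclideanSpace.proj (1 : Fin 2) : E2 →L[ℝ] ℝ).continuous
  have h0 : Continuous fun v : E2 => (v 0) :=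
    (EuclideanSpace.proj (0 : Fin 2) : E2 →L[ℝ] ℝ).continuous
  have h : Continuous fun v : E2 => (-(v 1)) • (EuclideanSpace.single 0 1 : E2)
      + (v 0) • (EuclideanSpace.single 1 1 : E2) :=
    ((h1.neg).smul continuous_const).add (h0.smul continuous_const)
  exact h.congr fun v => (rot90_decomp v).symm

/-! ### Hessian lemmas -/

lemma compl_open : IsOpen ({0}ᶜ : Set E2) := isOpen_compl_singleton

lemma diff_phi (φ : E2 → ℝ) (hsmooth : ContDiffOn ℝ (⊤ : ℕ∞) φ ({0}ᶜ : Set E2)) {p : E2} (hp : p ≠ 0) :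
    HasFDerivAt φ (fderiv ℝ φ p) p :=
  ((hsmooth.contDiffAt (compl_open.mem_nhds hp)).differentiableAt (by simp)).hasFDerivAt

lemma cd_fderiv (φ : E2 → ℝ) (hsmooth : ContDiffOn ℝ (⊤ : ℕ∞) φ ({0}ᶜ : Set E2)) :
    ContDiffOn ℝ (⊤ : ℕ∞) (fderiv ℝ φ) ({0}ᶜ : Set E2) :=
  hsmooth.fderiv_of_isOpen compl_open (by simp)

lemma diff_fderiv (φ : E2 → ℝ) (hsmooth : ContDiffOn ℝ (⊤ : ℕ∞) φ ({0}ᶜ : Set E2)) {p : E2} (hp : p ≠ 0) :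
    HasFDerivAt (fderiv ℝ φ) (fderiv ℝ (fderiv ℝ φ) p) p :=
  (((cd_fderiv φ hsmooth)).contDiffAt (compl_open.mem_nhds hp)).differentiableAt
    (by simp) |>.hasFDerivAt

lemma cont_fderiv (φ : E2 → ℝ) (hsmooth : ContDiffOn ℝ (⊤ : ℕ∞) φ ({0}ᶜ : Set E2)) :
    ContinuousOn (fderiv ℝ φ) ({0}ᶜ : Set E2) := (cd_fderiv φ hsmooth).continuousOn

lemma cont_fderiv2 (φ : E2 → ℝ) (hsmooth : ContDiffOn ℝ (⊤ : ℕ∞) φ ({0}ᶜ : Set E2)) :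
    ContinuousOn (fderiv ℝ (fderiv ℝ φ)) ({0}ᶜ : Set E2) :=
  ((cd_fderiv φ hsmooth).fderiv_of_isOpen (m := (⊤ : ℕ∞)) compl_open (by simp)).continuousOn

/-- first derivative is 0-homogeneous -/
lemma fderiv_homog (φ : E2 → ℝ) (hnorm : IsNorm2 φ)
    (hsmooth : ContDiffOn ℝ (⊤ : ℕ∞) φ ({0}ᶜ : Set E2))
    {c : ℝ} (hc : 0 < c) {p : E2} (hp : p ≠ 0) :
    fderiv ℝ φ (c • p) = fderiv ℝ φ p := by
  have hcp : c • p ≠ 0 := smul_ne_zero hc.ne' hp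
  have h1 : HasFDerivAt (fun x : E2 => φ (c • x))
      ((fderiv ℝ φ (c • p)).comp (c • ContinuousLinearMap.id ℝ E2)) p := by
    have hl : HasFDerivAt (fun x : E2 => c • x) (c • ContinuousLinearMap.id ℝ E2) p :=
      (hasFDerivAt_id p).const_smul c
    exact (diff_phi φ hsmooth hcp).comp p hl
  have h2 : HasFDerivAt (fun x : E2 => c * φ x) (c • fderiv ℝ φ p) p :=
    (diff_phi φ hsmooth hp).const_smul c
  have heq : (fun x : E2 => φ (c • x)) = fun x : E2 => c * φ x := by
    funext x
    rw [hnorm.2.2.1 c x, abs_of_pos hc]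
  rw [heq] at h1
  have h3 := h1.unique h2
  ext v
  have h4 := congrArg (fun L : E2 →L[ℝ] ℝ => L v) h3
  simp only [ContinuousLinearMap.comp_apply, ContinuousLinearMap.smul_apply,
    ContinuousLinearMap.coe_smul', Pi.smul_apply, ContinuousLinearMap.id_apply] at h4 ⊢
  rw [map_smul] at h4
  exact smul_right_injective ℝ hc.ne' h4

/-- Hessian scaling -/
lemma hess_homog (φ : E2 → ℝ) (hnorm : IsNorm2 φ)
    (hsmooth : ContDiffOn ℝ (⊤ : ℕ∞) φ ({0}ᶜ : Set E2))
    {c : ℝ} (hc : 0 < c) {p : E2} (hp : p ≠ 0) (v w : E2) :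
    hess φ (c • p) v w = c⁻¹ * hess φ p v w := by
  have hcp : c • p ≠ 0 := smul_ne_zero hc.ne' hp
  have h1 : HasFDerivAt (fun x : E2 => fderiv ℝ φ (c • x))
      ((fderiv ℝ (fderiv ℝ φ) (c • p)).comp (c • ContinuousLinearMap.id ℝ E2)) p := by
    have hl : HasFDerivAt (fun x : E2 => c • x) (c • ContinuousLinearMap.id ℝ E2) p :=
      (hasFDerivAt_id p).const_smul c
    exact (diff_fderiv φ hsmooth hcp).comp p hl
  have heq : (fun x : E2 => fderiv ℝ φ (c • x)) =ᶠ[nhds p] fderiv ℝ φ := by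
    filter_upwards [compl_open.mem_nhds hp] with x hx
    exact fderiv_homog φ hnorm hsmooth hc hx
  have h2 : HasFDerivAt (fderiv ℝ φ)
      ((fderiv ℝ (fderiv ℝ φ) (c • p)).comp (c • ContinuousLinearMap.id ℝ E2)) p :=
    h1.congr_of_eventuallyEq heq.symm
  have h3 := h2.unique (diff_fderiv φ hsmooth hp)
  have h4 := congrArg (fun L : E2 →L[ℝ] (E2 →L[ℝ] ℝ) => L v w) h3
  simp only [ContinuousLinearMap.comp_apply, ContinuousLinearMap.smul_apply,
    ContinuousLinearMap.coe_smul', Pi.smul_apply, ContinuousLinearMap.id_apply] at h4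
  rw [map_smul] at h4
  unfold hess
  field_simp
  rw [mul_comm]
  simpa [ContinuousLinearMap.smul_apply, smul_eq_mul] using h4

/-- Euler: hess φ p p = 0 -/
lemma hess_euler (φ : E2 → ℝ) (hnorm : IsNorm2 φ)
    (hsmooth : ContDiffOn ℝ (⊤ : ℕ∞) φ ({0}ᶜ : Set E2)) {p : E2} (hp : p ≠ 0) (w : E2) :
    hess φ p p w = 0 := by
  have h1 : HasDerivAt (fun t : ℝ => fderiv ℝ φ (t • p)) (fderiv ℝ (fderiv ℝ φ) p p) 1 := by
    have hl : HasDerivAt (fun t : ℝ => t • p) p 1 := by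
      simpa using (hasDerivAt_id (1:ℝ)).smul_const p
    have hd : HasFDerivAt (fderiv ℝ φ) (fderiv ℝ (fderiv ℝ φ) p) ((1:ℝ) • p) := by
      simpa using diff_fderiv φ hsmooth hp
    have := hd.comp_hasDerivAt 1 hl
    simpa [Function.comp_def] using this
  have heq : (fun t : ℝ => fderiv ℝ φ (t • p)) =ᶠ[nhds (1:ℝ)] fun _ => fderiv ℝ φ p := by
    filter_upwards [isOpen_Ioi.mem_nhds (by norm_num : (1:ℝ) ∈ Set.Ioi (0:ℝ))] with t ht
    exact fderiv_homog φ hnorm hsmooth ht hp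
  have h2 : HasDerivAt (fun _ : ℝ => fderiv ℝ φ p) (fderiv ℝ (fderiv ℝ φ) p p) 1 :=
    h1.congr_of_eventuallyEq heq.symm
  have h3 := (hasDerivAt_const (1:ℝ) (fderiv ℝ φ p)).unique h2
  have h0 : fderiv ℝ (fderiv ℝ φ) p p = 0 := h3.symm
  simp [hess, h0]

/-- symmetry of hessian -/
lemma hess_symm (φ : E2 → ℝ) (hsmooth : ContDiffOn ℝ (⊤ : ℕ∞) φ ({0}ᶜ : Set E2))
    {p : E2} (hp : p ≠ 0) (v w : E2) : hess φ p v w = hess φ p w v := by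
  apply second_derivative_symmetric_of_eventually (f := φ) (f' := fderiv ℝ φ)
  · filter_upwards [compl_open.mem_nhds hp] with y hy
    exact diff_phi φ hsmooth hy
  · exact diff_fderiv φ hsmooth hp

lemma hess_expand (φ : E2 → ℝ) (hnorm : IsNorm2 φ)
    (hsmooth : ContDiffOn ℝ (⊤ : ℕ∞) φ ({0}ᶜ : Set E2)) {ν τ : E2} (hνne : ν ≠ 0) (m : ℝ) :
    hess φ ν (m • ν - τ) (m • ν - τ) = hess φ ν τ τ := by
  have e1 : ∀ u, hess φ ν ν u = 0 := hess_euler φ hnorm hsmooth hνne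
  have e2 : hess φ ν τ ν = 0 := by
    rw [hess_symm φ hsmooth hνne]; exact e1 τ
  show fderiv ℝ (fderiv ℝ φ) ν (m • ν - τ) (m • ν - τ) = _
  rw [map_sub, map_smul]
  simp only [ContinuousLinearMap.sub_apply, ContinuousLinearMap.smul_apply, map_sub, map_smul,
    smul_eq_mul]
  have h1 : fderiv ℝ (fderiv ℝ φ) ν ν ν = 0 := e1 ν
  have h2 : fderiv ℝ (fderiv ℝ φ) ν ν τ = 0 := e1 τ
  have h3 : fderiv ℝ (fderiv ℝ φ) ν τ ν = 0 := e2
  rw [h1, h2, h3]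
  ring_nf
  rfl

/-! ### main theorem -/

theorem stmt10 (φ : E2 → ℝ) (hnorm : IsNorm2 φ)
    (hsmooth : ContDiffOn ℝ (⊤ : ℕ∞) φ ({0}ᶜ : Set E2))
    (helliptic : ∃ C > 0, ∀ p : E2, p ≠ 0 → ∀ v : E2,
      C * ‖v‖ ^ 2 ≤ hess (fun x => (φ x) ^ 2) p v v)
    (τ : E2) (hτ : ‖τ‖ = 1) (ν : E2) (hν : ν = rot90 τ)
    (γ γ' : ℝ → E2) (hγsm : ContDiff ℝ (⊤ : ℕ∞) γ)
    (hγ : ∀ x : ℝ, HasDerivAt γ (γ' x) x)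
    (hreg : ∀ x ∈ Set.Icc (0 : ℝ) 1, γ' x ≠ 0)
    (hline : ∀ x ∈ Set.Icc (0 : ℝ) 1, γ' x = ‖γ' x‖ • τ)
    (m : ℝ) (h₀ h₁ : ℝ → ℝ) (hh₀ : ContDiff ℝ (⊤ : ℕ∞) h₀) (hh₁ : ContDiff ℝ (⊤ : ℕ∞) h₁) :
    deriv (fun ε : ℝ => deriv (fun η : ℝ =>
        ∫ x in (0 : ℝ)..1, φ (rot90 (γ' x
          + (ε * deriv h₀ x + η * deriv h₁ x) • ν
          + (m * (ε * deriv h₀ x + η * deriv h₁ x)) • τ))) 0) 0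
      = ∫ x in (0 : ℝ)..1,
          (‖γ' x‖)⁻¹ * hess φ ν τ τ * (deriv h₀ x * deriv h₁ x) := by
  classical
  set A := deriv h₀ with hAdef
  set B := deriv h₁ with hBdef
  set w : E2 := m • ν - τ with hwdef
  set q : ℝ → E2 := fun x => rot90 (γ' x) with hqdef
  -- basic continuity
  have hAc : Continuous A := hh₀.continuous_deriv (by simp)
  have hBc : Continuous B := hh₁.continuous_deriv (by simp)
  have hγ'c : Continuous γ' := by
    have hdg : deriv γ = γ' := funext fun x => (hγ x).deriv
    rw [← hdg]; exact hγsm.continuous_deriv (by simp)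
  have hqc : Continuous q := continuous_rot90.comp hγ'c
  -- rewrite the integrand
  have key : ∀ (x : ℝ) (s : ℝ),
      rot90 (γ' x + s • ν + (m * s) • τ) = q x + s • w := by
    intro x s
    have hrν : rot90 ν = -τ := by rw [hν, rot90_rot90]
    rw [rot90_add, rot90_add, rot90_smul, rot90_smul, hrν, ← hν]
    show rot90 (γ' x) + s • (-τ) + (m * s) • ν = rot90 (γ' x) + s • (m • ν - τ)
    module
  -- unit normal
  have hν1 : ‖ν‖ = 1 := by rw [hν, norm_rot90, hτ]
  have hνne : ν ≠ 0 := by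
    intro h; rw [h, norm_zero] at hν1; norm_num at hν1
  have hqeq : ∀ x ∈ Set.Icc (0:ℝ) 1, q x = ‖γ' x‖ • ν := by
    intro x hx
    show rot90 (γ' x) = ‖γ' x‖ • ν
    conv_lhs => rw [hline x hx]
    rw [rot90_smul, ← hν]
  have hγ'pos : ∀ x ∈ Set.Icc (0:ℝ) 1, 0 < ‖γ' x‖ := fun x hx =>
    norm_pos_iff.2 (hreg x hx)
  -- nonvanishing of the relevant points
  have hne : ∀ x ∈ Set.Icc (0:ℝ) 1, ∀ s : ℝ, q x + s • w ≠ 0 := by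
    intro x hx s h0
    have hiτν : inner ℝ ν τ = (0:ℝ) := by rw [hν]; exact inner_rot90 τ
    have hiττ : inner ℝ τ τ = (1:ℝ) := by
      rw [real_inner_self_eq_norm_sq, hτ]; norm_num
    have hin := congrArg (fun v : E2 => (inner ℝ v τ : ℝ)) h0
    simp only [inner_add_left, inner_smul_left, inner_zero_left, hqeq x hx, hwdef,
      inner_sub_left, hiτν, hiττ, RCLike.ofReal_real_eq_id, id_eq, conj_trivial] at hin
    -- hin : ‖γ' x‖ * 0 + s * (m * 0 - 1) = 0
    have hs : s = 0 := by linarith [hin]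
    rw [hs, zero_smul, add_zero, hqeq x hx] at h0
    exact hνne (by
      have := smul_eq_zero.mp h0
      rcases this with h | h
      · exact absurd h (hγ'pos x hx).ne'
      · exact h)
  -- bounds for A, B on [0,1]
  obtain ⟨MA, hMA⟩ := isCompact_Icc.exists_bound_of_continuousOn
    (hAc.continuousOn : ContinuousOn A (Set.Icc (0:ℝ) 1))
  obtain ⟨MB, hMB⟩ := isCompact_Icc.exists_bound_of_continuousOn
    (hBc.continuousOn : ContinuousOn B (Set.Icc (0:ℝ) 1))
  have hMA0 : 0 ≤ MA := le_trans (norm_nonneg _) (hMA 0 ⟨le_refl _, zero_le_one⟩)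
  have hMB0 : 0 ≤ MB := le_trans (norm_nonneg _) (hMB 0 ⟨le_refl _, zero_le_one⟩)
  -- compact bounds for the derivatives of φ along the relevant points
  have hKbd : ∀ R : ℝ, ∃ C, 0 ≤ C ∧ ∀ x ∈ Set.Icc (0:ℝ) 1, ∀ s : ℝ, |s| ≤ R →
      ‖fderiv ℝ φ (q x + s • w)‖ ≤ C ∧ ‖fderiv ℝ (fderiv ℝ φ) (q x + s • w)‖ ≤ C := by
    intro R
    set K := (fun p : ℝ × ℝ => q p.1 + p.2 • w) '' (Set.Icc 0 1 ×ˢ Set.Icc (-R) R) with hKdef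
    have hKc : IsCompact K := (isCompact_Icc.prod isCompact_Icc).image
      ((hqc.comp continuous_fst).add (continuous_snd.smul continuous_const))
    have hKsub : K ⊆ ({0}ᶜ : Set E2) := by
      rintro _ ⟨⟨x, s⟩, ⟨hx, _⟩, rfl⟩
      exact hne x hx s
    obtain ⟨C₁, hC₁⟩ := hKc.exists_bound_of_continuousOn ((cont_fderiv φ hsmooth).mono hKsub)
    obtain ⟨C₂, hC₂⟩ := hKc.exists_bound_of_continuousOn (E := E2 →L[ℝ] E2 →L[ℝ] ℝ) ((cont_fderiv2 φ hsmooth).mono hKsub)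
    refine ⟨max (max C₁ C₂) 0, le_max_right _ _, fun x hx s hs => ?_⟩
    have hmem : q x + s • w ∈ K :=
      ⟨(x, s), ⟨hx, ⟨neg_le_of_abs_le hs, le_of_abs_le hs⟩⟩, rfl⟩
    exact ⟨le_trans (hC₁ _ hmem) (le_trans (le_max_left _ _) (le_max_left _ _)),
      le_trans (hC₂ _ hmem) (le_trans (le_max_right _ _) (le_max_left _ _))⟩
  have hIoc : Set.uIoc (0:ℝ) 1 ⊆ Set.Icc (0:ℝ) 1 := by
    rw [Set.uIoc_of_le zero_le_one]; exact Set.Ioc_subset_Icc_self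
  have hIcc : Set.uIcc (0:ℝ) 1 = Set.Icc (0:ℝ) 1 := Set.uIcc_of_le zero_le_one
  -- continuity of composed functions on [0,1]
  have hptc : ∀ g : ℝ → ℝ, Continuous g → Continuous (fun x => q x + g x • w) :=
    fun g hg => hqc.add (hg.smul continuous_const)
  have hφc : ∀ g : ℝ → ℝ, Continuous g →
      ContinuousOn (fun x => φ (q x + g x • w)) (Set.Icc (0:ℝ) 1) := by
    intro g hg
    exact hsmooth.continuousOn.comp (hptc g hg).continuousOn
      (fun x hx => hne x hx (g x))
  have hF₁c : ∀ g : ℝ → ℝ, Continuous g →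
      ContinuousOn (fun x => fderiv ℝ φ (q x + g x • w)) (Set.Icc (0:ℝ) 1) := by
    intro g hg
    exact (cont_fderiv φ hsmooth).comp (hptc g hg).continuousOn
      (fun x hx => hne x hx (g x))
  -- Layer 1 : the inner derivative in η
  have layer1 : ∀ ε : ℝ, HasDerivAt
      (fun η : ℝ => ∫ x in (0:ℝ)..1, φ (q x + (ε * A x + η * B x) • w))
      (∫ x in (0:ℝ)..1, B x * (fderiv ℝ φ (q x + (ε * A x + 0 * B x) • w) w)) 0 := by
    intro ε
    obtain ⟨C, hC0, hC⟩ := hKbd (|ε| * MA + MB)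
    have hcont' : ∀ η : ℝ, Continuous fun x => ε * A x + η * B x := by
      intro η
      exact ((continuous_const.mul hAc).add (continuous_const.mul hBc))
    have habs : ∀ η ∈ Metric.ball (0:ℝ) 1, ∀ x ∈ Set.Icc (0:ℝ) 1,
        |ε * A x + η * B x| ≤ |ε| * MA + MB := by
      intro η hη x hx
      have h1 : |ε * A x| ≤ |ε| * MA := by
        rw [abs_mul]
        exact mul_le_mul_of_nonneg_left (hMA x hx) (abs_nonneg ε)
      have h2 : |η * B x| ≤ MB := by
        rw [abs_mul]
        have hη1 : |η| ≤ 1 := le_of_lt (by simpa [Real.dist_eq] using hη)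
        calc |η| * |B x| ≤ 1 * MB :=
              mul_le_mul hη1 (hMB x hx) (abs_nonneg _) zero_le_one
          _ = MB := one_mul MB
      calc |ε * A x + η * B x| ≤ |ε * A x| + |η * B x| := abs_add_le _ _
        _ ≤ |ε| * MA + MB := add_le_add h1 h2
    apply (intervalIntegral.hasDerivAt_integral_of_dominated_loc_of_deriv_le
      (F := fun η x => φ (q x + (ε * A x + η * B x) • w))
      (F' := fun η x => B x * (fderiv ℝ φ (q x + (ε * A x + η * B x) • w) w))
      (bound := fun _ => MB * (C * ‖w‖)) (s := Metric.ball 0 1) (Metric.ball_mem_nhds _ zero_lt_one) ?_ ?_ ?_ ?_ ?_ ?_).2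
    · exact Filter.Eventually.of_forall fun η =>
        (((hφc _ (hcont' η)).mono hIoc)).aestronglyMeasurable measurableSet_uIoc
    · exact (hIcc ▸ hφc _ (hcont' 0)).intervalIntegrable
    · refine (ContinuousOn.mono ?_ hIoc).aestronglyMeasurable measurableSet_uIoc
      exact hBc.continuousOn.mul ((hF₁c _ (hcont' 0)).clm_apply continuousOn_const)
    · refine Filter.Eventually.of_forall fun x hx => fun η hη => ?_
      have hx' := hIoc hx
      have hsb := habs η hη x hx'
      have hb := (hC x hx' _ hsb).1
      have h1 : ‖fderiv ℝ φ (q x + (ε * A x + η * B x) • w) w‖ ≤ C * ‖w‖ :=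
        le_trans ((fderiv ℝ φ _).le_opNorm w)
          (mul_le_mul_of_nonneg_right hb (norm_nonneg w))
      calc ‖B x * (fderiv ℝ φ (q x + (ε * A x + η * B x) • w) w)‖
          = ‖B x‖ * ‖fderiv ℝ φ (q x + (ε * A x + η * B x) • w) w‖ := norm_mul _ _
        _ ≤ MB * (C * ‖w‖) := mul_le_mul (hMB x hx') h1 (norm_nonneg _) hMB0
    · exact intervalIntegrable_const
    · refine Filter.Eventually.of_forall fun x hx => fun η _ => ?_
      have hx' := hIoc hx
      have hinner : HasDerivAt (fun η : ℝ => q x + (ε * A x + η * B x) • w) (B x • w) η := by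
        have h1 : HasDerivAt (fun η : ℝ => ε * A x + η * B x) (B x) η := by
          simpa using ((hasDerivAt_id η).mul_const (B x)).const_add (ε * A x)
        exact (h1.smul_const w).const_add (q x)
      have hpt : q x + (ε * A x + η * B x) • w ≠ 0 := hne x hx' _
      have hcomp := (diff_phi φ hsmooth hpt).comp_hasDerivAt η hinner
      simpa [map_smul, smul_eq_mul, Function.comp_def] using hcomp
  -- rewrite the LHS using layer1
  have hGeq : (fun ε : ℝ => deriv (fun η : ℝ =>
      ∫ x in (0:ℝ)..1, φ (q x + (ε * A x + η * B x) • w)) 0)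
      = fun ε : ℝ => ∫ x in (0:ℝ)..1,
          B x * (fderiv ℝ φ (q x + (ε * A x + 0 * B x) • w) w) :=
    funext fun ε => (layer1 ε).deriv
  -- Layer 2 : outer derivative in ε
  have layer2 : HasDerivAt
      (fun ε : ℝ => ∫ x in (0:ℝ)..1, B x * (fderiv ℝ φ (q x + (ε * A x + 0 * B x) • w) w))
      (∫ x in (0:ℝ)..1,
        B x * (fderiv ℝ (fderiv ℝ φ) (q x + ((0:ℝ) * A x + 0 * B x) • w) (A x • w) w)) 0 := by
    obtain ⟨C, hC0, hC⟩ := hKbd MA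
    have hcont' : ∀ ε : ℝ, Continuous fun x => ε * A x + 0 * B x := by
      intro ε
      exact ((continuous_const.mul hAc).add (continuous_const.mul hBc))
    have habs : ∀ ε ∈ Metric.ball (0:ℝ) 1, ∀ x ∈ Set.Icc (0:ℝ) 1,
        |ε * A x + 0 * B x| ≤ MA := by
      intro ε hε x hx
      have hε1 : |ε| ≤ 1 := le_of_lt (by simpa [Real.dist_eq] using hε)
      rw [zero_mul, add_zero, abs_mul]
      calc |ε| * |A x| ≤ 1 * MA := mul_le_mul hε1 (hMA x hx) (abs_nonneg _) zero_le_one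
        _ = MA := one_mul MA
    apply (intervalIntegral.hasDerivAt_integral_of_dominated_loc_of_deriv_le
      (F := fun ε x => B x * (fderiv ℝ φ (q x + (ε * A x + 0 * B x) • w) w))
      (F' := fun ε x =>
        B x * (fderiv ℝ (fderiv ℝ φ) (q x + (ε * A x + 0 * B x) • w) (A x • w) w))
      (bound := fun _ => MB * (C * (MA * ‖w‖) * ‖w‖)) (s := Metric.ball 0 1) (Metric.ball_mem_nhds _ zero_lt_one) ?_ ?_ ?_ ?_ ?_ ?_).2
    · refine Filter.Eventually.of_forall fun ε => ?_
      refine (ContinuousOn.mono ?_ hIoc).aestronglyMeasurable measurableSet_uIoc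
      exact hBc.continuousOn.mul ((hF₁c _ (hcont' ε)).clm_apply continuousOn_const)
    · refine (hIcc ▸ ?_ : ContinuousOn _ (Set.uIcc (0:ℝ) 1)).intervalIntegrable
      exact hBc.continuousOn.mul ((hF₁c _ (hcont' 0)).clm_apply continuousOn_const)
    · refine (ContinuousOn.mono ?_ hIoc).aestronglyMeasurable measurableSet_uIoc
      have hF₂c : ContinuousOn
          (fun x => fderiv ℝ (fderiv ℝ φ) (q x + ((0:ℝ) * A x + 0 * B x) • w))
          (Set.Icc (0:ℝ) 1) :=
        (cont_fderiv2 φ hsmooth).comp (hptc _ (hcont' 0)).continuousOn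
          (fun x hx => hne x hx _)
      exact hBc.continuousOn.mul
        (((hF₂c.clm_apply (hAc.continuousOn.smul continuousOn_const)).clm_apply
          continuousOn_const))
    · refine Filter.Eventually.of_forall fun x hx => fun ε hε => ?_
      have hx' := hIoc hx
      have hb := (hC x hx' _ (habs ε hε x hx')).2
      have h1 : ‖fderiv ℝ (fderiv ℝ φ) (q x + (ε * A x + 0 * B x) • w) (A x • w) w‖
          ≤ C * (MA * ‖w‖) * ‖w‖ := by
        have haw : ‖A x • w‖ ≤ MA * ‖w‖ := by
          rw [norm_smul]
          exact mul_le_mul_of_nonneg_right (hMA x hx') (norm_nonneg w)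
        calc ‖fderiv ℝ (fderiv ℝ φ) (q x + (ε * A x + 0 * B x) • w) (A x • w) w‖
            ≤ ‖fderiv ℝ (fderiv ℝ φ) (q x + (ε * A x + 0 * B x) • w)‖ * ‖A x • w‖ * ‖w‖ :=
              ContinuousLinearMap.le_opNorm₂ _ _ _
          _ ≤ C * (MA * ‖w‖) * ‖w‖ := by
              refine mul_le_mul_of_nonneg_right ?_ (norm_nonneg w)
              exact mul_le_mul hb haw (norm_nonneg _) hC0
      calc ‖B x * (fderiv ℝ (fderiv ℝ φ) (q x + (ε * A x + 0 * B x) • w) (A x • w) w)‖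
          = ‖B x‖ * ‖fderiv ℝ (fderiv ℝ φ) (q x + (ε * A x + 0 * B x) • w) (A x • w) w‖ :=
            norm_mul _ _
        _ ≤ MB * (C * (MA * ‖w‖) * ‖w‖) := by
            refine mul_le_mul (hMB x hx') h1 (norm_nonneg _) hMB0
    · exact intervalIntegrable_const
    · refine Filter.Eventually.of_forall fun x hx => fun ε _ => ?_
      have hx' := hIoc hx
      have hinner : HasDerivAt (fun ε : ℝ => q x + (ε * A x + 0 * B x) • w) (A x • w) ε := by
        have h1 : HasDerivAt (fun ε : ℝ => ε * A x + 0 * B x) (A x) ε := by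
          simpa using ((hasDerivAt_id ε).mul_const (A x)).add_const (0 * B x)
        exact (h1.smul_const w).const_add (q x)
      have hpt : q x + (ε * A x + 0 * B x) • w ≠ 0 := hne x hx' _
      have hcomp := (diff_fderiv φ hsmooth hpt).comp_hasDerivAt ε hinner
      have happ := hcomp.clm_apply (hasDerivAt_const ε w)
      simp only [map_zero, add_zero] at happ
      exact happ.const_mul (B x)
  -- put everything together
  simp only [key]
  rw [hGeq, layer2.deriv]
  apply intervalIntegral.integral_congr
  intro x hx
  have hx' : x ∈ Set.Icc (0:ℝ) 1 := hIcc ▸ hx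
  have hc := hγ'pos x hx'
  simp only [zero_mul, add_zero, zero_smul, zero_add]
  have hsm : fderiv ℝ (fderiv ℝ φ) (q x) (A x • w) w
      = A x * (fderiv ℝ (fderiv ℝ φ) (q x) w w) := by
    rw [map_smul]
    simp [smul_eq_mul]
  have hq : fderiv ℝ (fderiv ℝ φ) (q x) w w = (‖γ' x‖)⁻¹ * hess φ ν τ τ := by
    have h1 : fderiv ℝ (fderiv ℝ φ) (q x) w w = hess φ (‖γ' x‖ • ν) w w := by
      rw [hqeq x hx']; rfl
    rw [h1, hess_homog φ hnorm hsmooth hc hνne,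
      hwdef, hess_expand φ hnorm hsmooth hνne]
  rw [hsm, hq]
  ring
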